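/- Define V(p) := U(p)/p² = (φ(Φ⁻¹(p))/p)². Then V is strictly decreasing on (0, 0.1], and there exist absolute constants c₀, c, C > 0 with the following property: for all 0 < q < p ≤ 0.1, if ζ := V(q) − V(p) satisfies 0 < ζ ≤ c₀, then c · ζ · p ≤ p − q ≤ C · ζ · p. -/

import Mathlib

open Real MeasureTheory Set Filter Topology

/-- Standard Gaussian density. -/
noncomputable def gphi (x : ℝ) : ℝ := (Real.sqrt (2 * Real.pi))⁻¹ * Real.exp (-(x ^ 2) / 2)

/-- Standard Gaussian CDF. -/
noncomputable def Phi (r : ℝ) : ℝ := ∫ x in Set.Iic r, gphi x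

/-- Inverse of the standard Gaussian CDF (on (0,1)). -/
noncomputable def PhiInv : ℝ → ℝ := Function.invFun Phi

/-- `V(p) := U(p)/p² = (φ(Φ⁻¹(p))/p)²`. -/
noncomputable def Vfun (p : ℝ) : ℝ := (gphi (PhiInv p) / p) ^ 2

lemma gphi_pos (x : ℝ) : 0 < gphi x := by
  unfold gphi
  positivity

lemma gphi_eq (x : ℝ) : gphi x = (Real.sqrt (2 * Real.pi))⁻¹ * Real.exp (-(1/2) * x ^ 2) := by
  unfold gphi; ring_nf

lemma continuous_gphi : Continuous gphi := by
  unfold gphi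
  fun_prop

lemma integrable_gphi : Integrable gphi := by
  have h : Integrable (fun x : ℝ => Real.exp (-(1/2) * x ^ 2)) :=
    integrable_exp_neg_mul_sq (by norm_num)
  exact (h.const_mul ((Real.sqrt (2 * Real.pi))⁻¹)).congr
    (Eventually.of_forall fun x => (gphi_eq x).symm)

lemma integral_gphi : ∫ x, gphi x = 1 := by
  have h := integral_gaussian (1/2 : ℝ)
  have : ∫ x, gphi x = (Real.sqrt (2 * Real.pi))⁻¹ * ∫ x : ℝ, Real.exp (-(1/2) * x ^ 2) := by
    rw [← integral_const_mul]
    congr 1; ext x; exact gphi_eq x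
  rw [this, h]
  rw [show Real.pi / (1/2 : ℝ) = 2 * Real.pi by ring]
  rw [inv_mul_cancel₀ (by positivity)]

lemma gphi_even (x : ℝ) : gphi (-x) = gphi x := by unfold gphi; ring_nf

lemma Phi_sub (a b : ℝ) : Phi b - Phi a = ∫ x in a..b, gphi x :=
  intervalIntegral.integral_Iic_sub_Iic integrable_gphi.integrableOn integrable_gphi.integrableOn

lemma hasDerivAt_Phi (r : ℝ) : HasDerivAt Phi (gphi r) r := by
  have h : HasDerivAt (fun u => ∫ x in (0:ℝ)..u, gphi x) (gphi r) r :=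
    intervalIntegral.integral_hasDerivAt_right integrable_gphi.intervalIntegrable
      (continuous_gphi.stronglyMeasurable.stronglyMeasurableAtFilter) continuous_gphi.continuousAt
  have : Phi = fun u => (∫ x in (0:ℝ)..u, gphi x) + Phi 0 := by
    funext u
    have := Phi_sub 0 u
    linarith
  rw [this]
  exact h.add_const _

lemma intervalIntegral_gphi_pos {a b : ℝ} (h : a < b) : 0 < ∫ x in a..b, gphi x :=
  intervalIntegral.intervalIntegral_pos_of_pos
    integrable_gphi.intervalIntegrable gphi_pos h

lemma Phi_strictMono : StrictMono Phi := by
  intro a b hab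
  have := intervalIntegral_gphi_pos hab
  have h2 := Phi_sub a b
  linarith

lemma Phi_pos (r : ℝ) : 0 < Phi r := by
  have h1 : 0 ≤ Phi (r - 1) := setIntegral_nonneg measurableSet_Iic fun x _ => (gphi_pos x).le
  have h2 := Phi_sub (r - 1) r
  have h3 := intervalIntegral_gphi_pos (show r - 1 < r by linarith)
  linarith

lemma Phi_neg_eq (x : ℝ) : Phi (-x) = 1 - Phi x := by
  have h1 : (∫ y in Iic (-x), gphi (-y)) = ∫ y in Ioi x, gphi y := by
    simpa using integral_comp_neg_Iic (-x) gphi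
  have h2 : Phi (-x) = ∫ y in Ioi x, gphi y := by
    rw [← h1]
    simp only [Phi]
    congr 1; funext y; exact (gphi_even y).symm
  have h3 : Phi x + ∫ y in Ioi x, gphi y = 1 := by
    rw [Phi, intervalIntegral.integral_Iic_add_Ioi integrable_gphi.integrableOn
      integrable_gphi.integrableOn, integral_gphi]
  linarith

lemma Phi_lt_one (r : ℝ) : Phi r < 1 := by
  have := Phi_pos (-r)
  have := Phi_neg_eq r
  linarith

lemma Phi_zero : Phi 0 = 1/2 := by
  have := Phi_neg_eq 0
  rw [neg_zero] at this
  linarith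

lemma tendsto_Phi_atTop : Tendsto Phi atTop (𝓝 1) := by
  have h : Tendsto (fun u => ∫ x in (0:ℝ)..u, gphi x) atTop (𝓝 (∫ x in Ioi (0:ℝ), gphi x)) :=
    MeasureTheory.intervalIntegral_tendsto_integral_Ioi 0 integrable_gphi.integrableOn tendsto_id
  have h2 : Phi 0 + ∫ x in Ioi (0:ℝ), gphi x = 1 := by
    rw [Phi, intervalIntegral.integral_Iic_add_Ioi integrable_gphi.integrableOn
      integrable_gphi.integrableOn, integral_gphi]
  have h3 : Tendsto (fun u => Phi 0 + ∫ x in (0:ℝ)..u, gphi x) atTop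
      (𝓝 (Phi 0 + ∫ x in Ioi (0:ℝ), gphi x)) := tendsto_const_nhds.add h
  rw [h2] at h3
  refine h3.congr fun u => ?_
  have := Phi_sub 0 u; linarith

lemma tendsto_Phi_atBot : Tendsto Phi atBot (𝓝 0) := by
  have h : Tendsto (fun u : ℝ => Phi (-u)) atBot (𝓝 1) :=
    tendsto_Phi_atTop.comp tendsto_neg_atBot_atTop
  have h2 : Tendsto (fun u : ℝ => 1 - Phi (-u)) atBot (𝓝 (1 - 1)) := tendsto_const_nhds.sub h
  norm_num at h2
  refine h2.congr fun u => ?_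
  rw [Phi_neg_eq]; ring

lemma continuous_Phi : Continuous Phi := by
  exact continuous_iff_continuousAt.2 fun r => (hasDerivAt_Phi r).continuousAt

lemma Phi_surjOn (p : ℝ) (hp0 : 0 < p) (hp1 : p < 1) : ∃ x, Phi x = p := by
  obtain ⟨a, ha⟩ : ∃ a, Phi a < p := by
    have := tendsto_Phi_atBot.eventually_lt_const hp0
    exact this.exists
  obtain ⟨b, hb⟩ : ∃ b, p < Phi b := by
    have := tendsto_Phi_atTop.eventually_const_lt hp1
    exact this.exists
  have hab : a ≤ b := by
    by_contra h
    push_neg at h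
    exact absurd (Phi_strictMono h) (by linarith)
  have := intermediate_value_Icc hab (continuous_Phi.continuousOn)
  obtain ⟨x, _, hx⟩ := this ⟨ha.le, hb.le⟩
  exact ⟨x, hx⟩

lemma Phi_PhiInv {p : ℝ} (hp0 : 0 < p) (hp1 : p < 1) : Phi (PhiInv p) = p :=
  Function.invFun_eq (Phi_surjOn p hp0 hp1)

lemma nonneg_of_tendsto_zero {f f' : ℝ → ℝ} {a : ℝ}
    (hd : ∀ x, a ≤ x → HasDerivAt f (f' x) x)
    (h0 : ∀ x, a ≤ x → f' x ≤ 0)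
    (hlim : Tendsto f atTop (𝓝 0)) :
    ∀ x, a ≤ x → 0 ≤ f x := by
  have mono : AntitoneOn f (Ici a) := by
    apply antitoneOn_of_deriv_nonpos (convex_Ici a)
    · exact fun x hx => (hd x hx).continuousAt.continuousWithinAt
    · intro x hx
      rw [interior_Ici] at hx
      exact (hd x hx.le).differentiableAt.differentiableWithinAt
    · intro x hx
      rw [interior_Ici] at hx
      rw [(hd x hx.le).deriv]
      exact h0 x hx.le
  intro x hx
  refine le_of_tendsto hlim ?_
  filter_upwards [eventually_ge_atTop x] with y hy
  exact mono hx (le_trans hx hy) hy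

lemma hasDerivAt_gphi (x : ℝ) : HasDerivAt gphi (-x * gphi x) x := by
  have h1 : HasDerivAt (fun y : ℝ => -(y ^ 2) / 2) (-x) x := by
    have := ((hasDerivAt_pow 2 x).neg).div_const 2
    simpa using this.congr_deriv (by ring)
  have h2 := (h1.exp).const_mul ((Real.sqrt (2 * Real.pi))⁻¹)
  unfold gphi
  exact h2.congr_deriv (by ring)

lemma tendsto_gphi_atTop : Tendsto gphi atTop (𝓝 0) := by
  have h1 : Tendsto (fun x : ℝ => x ^ 2 / 2) atTop atTop :=
    (tendsto_pow_atTop two_ne_zero).atTop_div_const (by norm_num)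
  have h2 : Tendsto (fun x : ℝ => -(x ^ 2) / 2) atTop atBot := by
    have := tendsto_neg_atTop_atBot.comp h1
    refine this.congr fun x => ?_
    simp [neg_div]
  have h3 := Real.tendsto_exp_atBot.comp h2
  have h4 := h3.const_mul ((Real.sqrt (2 * Real.pi))⁻¹)
  unfold gphi
  simpa using h4

lemma tendsto_mills_term (a : ℝ) (ha : 0 < a) :
    Tendsto (fun x : ℝ => x * gphi x / (x ^ 2 + a)) atTop (𝓝 0) := by
  apply squeeze_zero' (g := gphi)
  · filter_upwards [eventually_ge_atTop 1] with x hx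
    exact div_nonneg (mul_nonneg (by linarith) (gphi_pos x).le) (by positivity)
  · filter_upwards [eventually_ge_atTop 1] with x hx
    rw [div_le_iff₀ (by positivity)]
    have h1 : (1:ℝ) ≤ x := hx
    have hxx : x ≤ x ^ 2 + a := by nlinarith
    calc x * gphi x = gphi x * x := mul_comm _ _
      _ ≤ gphi x * (x ^ 2 + a) := mul_le_mul_of_nonneg_left hxx (gphi_pos x).le
  · exact tendsto_gphi_atTop

lemma tendsto_Phi_neg : Tendsto (fun x : ℝ => Phi (-x)) atTop (𝓝 0) :=
  tendsto_Phi_atBot.comp tendsto_neg_atTop_atBot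

lemma hasDerivAt_Phi_neg (x : ℝ) : HasDerivAt (fun y : ℝ => Phi (-y)) (-gphi x) x := by
  have := (hasDerivAt_Phi (-x)).comp x (hasDerivAt_neg x)
  simpa [gphi_even, Function.comp_def] using this

lemma hasDerivAt_millsfrac (a x : ℝ) (ha : 0 < a) :
    HasDerivAt (fun y : ℝ => y * gphi y / (y ^ 2 + a))
      (((gphi x + x * (-x * gphi x)) * (x ^ 2 + a) - x * gphi x * (2 * x)) / (x ^ 2 + a) ^ 2) x := by
  have hnum : HasDerivAt (fun y : ℝ => y * gphi y) (gphi x + x * (-x * gphi x)) x := by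
    have := (hasDerivAt_id x).mul (hasDerivAt_gphi x)
    exact this.congr_deriv (by simp only [id]; ring)
  have hden : HasDerivAt (fun y : ℝ => y ^ 2 + a) (2 * x) x := by
    have := (hasDerivAt_pow 2 x).add_const a
    simpa using this
  exact hnum.div hden (by positivity)

lemma mills_lower (x : ℝ) (hx : 0 ≤ x) : x * gphi x / (x ^ 2 + 1) ≤ Phi (-x) := by
  set F : ℝ → ℝ := fun y => Phi (-y) - y * gphi y / (y ^ 2 + 1) with hF
  set F' : ℝ → ℝ := fun y =>
    -gphi y - ((gphi y + y * (-y * gphi y)) * (y ^ 2 + 1) - y * gphi y * (2 * y)) / (y ^ 2 + 1) ^ 2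
  have key := nonneg_of_tendsto_zero (f := F) (f' := F') (a := 0)
    (fun y _ => (hasDerivAt_Phi_neg y).sub (hasDerivAt_millsfrac 1 y one_pos))
    (fun y _ => by
      have hpos : (0:ℝ) < (y ^ 2 + 1) ^ 2 := by positivity
      have heq : F' y = -2 * gphi y / (y ^ 2 + 1) ^ 2 := by
        simp only [F']
        field_simp
        ring
      rw [heq]
      exact div_nonpos_of_nonpos_of_nonneg (by nlinarith [gphi_pos y]) (by positivity))
    (by
      have h := tendsto_Phi_neg.sub (tendsto_mills_term 1 one_pos)
      exact (sub_zero (0:ℝ)) ▸ h)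
  have := key x hx
  simp only [hF] at this
  linarith

lemma mills_upper (x : ℝ) (hx : 1 ≤ x) : Phi (-x) ≤ x * gphi x / (x ^ 2 + 1/5) := by
  set G : ℝ → ℝ := fun y => y * gphi y / (y ^ 2 + 1/5) - Phi (-y) with hG
  set G' : ℝ → ℝ := fun y =>
    ((gphi y + y * (-y * gphi y)) * (y ^ 2 + 1/5) - y * gphi y * (2 * y)) / (y ^ 2 + 1/5) ^ 2 + gphi y
  have key := nonneg_of_tendsto_zero (f := G) (f' := G') (a := 1)
    (fun y _ =>
      ((hasDerivAt_millsfrac (1/5) y (by norm_num)).sub (hasDerivAt_Phi_neg y)).congr_deriv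
        (by ring))
    (fun y hy => by
      have hpos : (0:ℝ) < (y ^ 2 + 1/5) ^ 2 := by positivity
      have heq : G' y = gphi y * (6/25 - (4/5) * y ^ 2) / (y ^ 2 + 1/5) ^ 2 := by
        simp only [G']
        field_simp
        ring
      rw [heq]
      exact div_nonpos_of_nonpos_of_nonneg
        (mul_nonpos_of_nonneg_of_nonpos (gphi_pos y).le (by nlinarith)) (by positivity))
    (by
      have h := (tendsto_mills_term (1/5) (by norm_num)).sub tendsto_Phi_neg
      exact (sub_zero (0:ℝ)) ▸ h)
  have := key x hx
  simp only [hG] at this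
  linarith

lemma gphi_zero_le : gphi 0 ≤ 2/5 := by
  have hsqrt : (5/2:ℝ) ≤ Real.sqrt (2 * Real.pi) := by
    rw [show (5/2:ℝ) = Real.sqrt ((5/2)^2) from (Real.sqrt_sq (by norm_num)).symm]
    exact Real.sqrt_le_sqrt (by nlinarith [Real.pi_gt_d6])
  have h0 : gphi 0 = (Real.sqrt (2 * Real.pi))⁻¹ := by
    unfold gphi; norm_num
  rw [h0]
  calc (Real.sqrt (2 * Real.pi))⁻¹ ≤ (5/2:ℝ)⁻¹ := by
        apply inv_anti₀ (by norm_num) hsqrt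
    _ = 2/5 := by norm_num

lemma gphi_mono {a b : ℝ} (hab : a ≤ b) (hb : b ≤ 0) : gphi a ≤ gphi b := by
  unfold gphi
  apply mul_le_mul_of_nonneg_left _ (by positivity)
  apply Real.exp_le_exp.2
  nlinarith

lemma Phi_neg_one : (0.1 : ℝ) ≤ Phi (-1) := by
  have h1 : Phi 0 - Phi (-1) = ∫ x in (-1 : ℝ)..0, gphi x := Phi_sub (-1) 0
  have h2 : (∫ x in (-1:ℝ)..0, gphi x) ≤ ∫ _x in (-1:ℝ)..0, gphi 0 := by
    apply intervalIntegral.integral_mono_on (by norm_num) integrable_gphi.intervalIntegrable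
      intervalIntegrable_const
    intro x hx
    exact gphi_mono hx.2 le_rfl
  have h3 : (∫ _x in (-1:ℝ)..0, gphi 0) = gphi 0 := by simp
  have h4 := gphi_zero_le
  have h5 := Phi_zero
  rw [h3] at h2
  norm_num
  linarith

lemma g_bounds {u : ℝ} (hu : u ≤ -1) :
    ((-u) ^ 2 + 1/5) * Phi u ≤ (-u) * gphi u ∧ (-u) * gphi u ≤ ((-u) ^ 2 + 1) * Phi u := by
  have hx1 : (1:ℝ) ≤ -u := by linarith
  have hgu : gphi (-u) = gphi u := gphi_even u
  have hPu : Phi (-(-u)) = Phi u := by rw [neg_neg]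
  constructor
  · have := mills_upper (-u) hx1
    rw [hgu, hPu, le_div_iff₀ (by positivity)] at this
    linarith
  · have := mills_lower (-u) (by linarith)
    rw [hgu, hPu, div_le_iff₀ (by positivity)] at this
    linarith

lemma xP_le_g {u : ℝ} (hu : u ≤ -1) : (-u) * Phi u ≤ gphi u := by
  obtain ⟨h1, _⟩ := g_bounds hu
  have hx1 : (1:ℝ) ≤ -u := by linarith
  have hP := Phi_pos u
  have : (-u) * ((-u) * Phi u) ≤ (-u) * gphi u := by nlinarith
  exact le_of_mul_le_mul_left this (by linarith)

lemma g_le_2xP {u : ℝ} (hu : u ≤ -1) : gphi u ≤ 2 * (-u) * Phi u := by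
  obtain ⟨_, h2⟩ := g_bounds hu
  have hx1 : (1:ℝ) ≤ -u := by linarith
  have hP := Phi_pos u
  have h3 : ((-u)^2 + 1) * Phi u ≤ 2 * (-u)^2 * Phi u := by
    nlinarith [mul_nonneg (show (0:ℝ) ≤ (-u)^2 - 1 by nlinarith) hP.le]
  have : (-u) * gphi u ≤ (-u) * (2 * (-u) * Phi u) := by nlinarith
  exact le_of_mul_le_mul_left this (by linarith)

lemma hasDerivAt_H (u : ℝ) :
    HasDerivAt (fun y => (gphi y / Phi y) ^ 2)
      (-(2 * (gphi u / Phi u) ^ 2 * (gphi u / Phi u + u))) u := by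
  have hdiv : HasDerivAt (fun y => gphi y / Phi y)
      ((-u * gphi u * Phi u - gphi u * gphi u) / (Phi u) ^ 2) u :=
    (hasDerivAt_gphi u).div (hasDerivAt_Phi u) (Phi_pos u).ne'
  have h2 := hdiv.pow 2
  refine h2.congr_deriv ?_
  have hP := (Phi_pos u).ne'
  norm_num
  field_simp
  ring

lemma D_bounds {u : ℝ} (hu : u ≤ -1) :
    (2/5) * (-u) ≤ 2 * (gphi u / Phi u) ^ 2 * (gphi u / Phi u + u) ∧
    2 * (gphi u / Phi u) ^ 2 * (gphi u / Phi u + u) ≤ 8 * (-u) := by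
  obtain ⟨A2, A1⟩ := g_bounds hu
  have hx1 : (1:ℝ) ≤ -u := by linarith
  have hP := Phi_pos u
  have hg := gphi_pos u
  have hxPg := xP_le_g hu
  have hg2 := g_le_2xP hu
  set g := gphi u
  set P := Phi u
  have hE : 2 * (g / P) ^ 2 * (g / P + u) = 2 * g ^ 2 * (g - (-u) * P) / P ^ 3 := by
    rw [eq_div_iff (pow_ne_zero 3 hP.ne')]
    field_simp
    ring
  rw [hE]
  have hsub : 0 ≤ g - (-u) * P := by linarith
  constructor
  · rw [le_div_iff₀ (by positivity)]
    have f1 : (-u) ^ 2 * P ^ 2 ≤ g ^ 2 := by nlinarith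
    have f1' : (-u) ^ 2 * P ^ 2 * (g - (-u) * P) ≤ g ^ 2 * (g - (-u) * P) :=
      mul_le_mul_of_nonneg_right f1 hsub
    have f2 : (1/5) * P ≤ (-u) * g - (-u) ^ 2 * P := by nlinarith
    have f2' : (1/5) * P * ((-u) * P ^ 2) ≤ ((-u) * g - (-u) ^ 2 * P) * ((-u) * P ^ 2) :=
      mul_le_mul_of_nonneg_right f2 (by positivity)
    nlinarith [f1', f2']
  · rw [div_le_iff₀ (by positivity)]
    have f3 : g ^ 2 ≤ 4 * (-u) ^ 2 * P ^ 2 := by nlinarith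
    have f4 : (-u) * (g - (-u) * P) ≤ P := by nlinarith
    have f4' : g ^ 2 * ((-u) * (g - (-u) * P)) ≤ g ^ 2 * P :=
      mul_le_mul_of_nonneg_left f4 (by positivity)
    have f3' : g ^ 2 * P ≤ 4 * (-u) ^ 2 * P ^ 2 * P :=
      mul_le_mul_of_nonneg_right f3 hP.le
    have key : 2 * g ^ 2 * (g - (-u) * P) * (-u) ≤ 8 * (-u) * P ^ 3 * (-u) := by nlinarith
    exact le_of_mul_le_mul_right key (by linarith)

lemma gphi_ratio (s t : ℝ) : gphi s = gphi t * Real.exp ((t ^ 2 - s ^ 2) / 2) := by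
  unfold gphi
  rw [mul_assoc, ← Real.exp_add]
  ring_nf

lemma endgame (p q t s σ D ζ gt gs : ℝ)
    (hp0 : 0 < p) (hqp : q < p)
    (ht1 : t ≤ -1) (hσs : s < σ) (hσt : σ < t)
    (hDl : (2/5) * (-σ) ≤ D) (hDu : D ≤ 8 * (-σ))
    (hζeq : ζ = D * (t - s))
    (hIu : p - q ≤ (t - s) * gt) (hIl : (t - s) * gs ≤ p - q)
    (hgt2 : gt ≤ 2 * (-t) * p) (hgt1 : (-t) * p ≤ gt)
    (hgt0 : 0 < gt)
    (hratio : gs = gt * Real.exp ((t ^ 2 - s ^ 2) / 2)) :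
    0 < ζ ∧ p - q ≤ 5 * ζ * p ∧ (ζ ≤ 1/10 → 1/20 * ζ * p ≤ p - q) := by
  have hts : 0 < t - s := by linarith
  have hxσ1 : (1:ℝ) ≤ -σ := by linarith
  have hxt1 : (1:ℝ) ≤ -t := by linarith
  have hxσt : -t ≤ -σ := by linarith
  have hDpos : 0 < D := lt_of_lt_of_le (by linarith) hDl
  have hζpos : 0 < ζ := by rw [hζeq]; exact mul_pos hDpos hts
  refine ⟨hζpos, ?_, ?_⟩
  · have c1 : (2/5) * (-t) * (t - s) ≤ ζ := by
      rw [hζeq]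
      have h1 := mul_le_mul_of_nonneg_right hDl hts.le
      have h2 := mul_le_mul_of_nonneg_right
        (show (2/5) * (-t) ≤ (2/5) * (-σ) by linarith) hts.le
      linarith
    have c2 : p - q ≤ (t - s) * (2 * (-t) * p) :=
      le_trans hIu (mul_le_mul_of_nonneg_left hgt2 hts.le)
    have c3 : (2/5) * (-t) * (t - s) * p ≤ ζ * p := mul_le_mul_of_nonneg_right c1 hp0.le
    nlinarith [c2, c3]
  · intro hζsmall
    have d0 : (2/5) * (-σ) * (t - s) ≤ ζ := by
      rw [hζeq]; exact mul_le_mul_of_nonneg_right hDl hts.le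
    have dts : t - s ≤ (5/2) * ζ := by
      have h1 := mul_le_mul_of_nonneg_right hxσ1 hts.le
      linarith
    have dts4 : t - s ≤ 1/4 := by linarith
    have d0t : (2/5) * (-t) * (t - s) ≤ ζ := by
      have h2 := mul_le_mul_of_nonneg_right
        (show (2/5) * (-t) ≤ (2/5) * (-σ) by linarith) hts.le
      linarith
    have d1 : s ^ 2 - t ^ 2 ≤ 3/4 := by
      have hid : s ^ 2 - t ^ 2 = (t - s) * (2 * (-t) + (t - s)) := by ring
      have hsq : (t - s) * (t - s) ≤ (1/4) * (1/4) :=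
        mul_le_mul dts4 dts4 hts.le (by norm_num)
      nlinarith [d0t, hζsmall]
    have d2 : gt * (1/2) ≤ gs := by
      have hexp : Real.exp (-(3/8)) ≤ Real.exp ((t ^ 2 - s ^ 2) / 2) :=
        Real.exp_le_exp.2 (by linarith)
      have h2 : Real.exp (3/8) < 2 := by
        rw [← Real.exp_log (by norm_num : (0:ℝ) < 2)]
        exact Real.exp_lt_exp.2 (by linarith [Real.log_two_gt_d9])
      have he : (1/2:ℝ) ≤ Real.exp (-(3/8)) := by
        rw [Real.exp_neg, show (1/2:ℝ) = 2⁻¹ by norm_num]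
        exact inv_anti₀ (Real.exp_pos _) h2.le
      calc gt * (1/2) ≤ gt * Real.exp (-(3/8)) :=
            mul_le_mul_of_nonneg_left he hgt0.le
        _ ≤ gt * Real.exp ((t ^ 2 - s ^ 2) / 2) :=
            mul_le_mul_of_nonneg_left hexp hgt0.le
        _ = gs := hratio.symm
    have d3 : ζ ≤ 10 * (-t) * (t - s) := by
      have h8 : ζ ≤ 8 * (-σ) * (t - s) := by
        rw [hζeq]; exact mul_le_mul_of_nonneg_right hDu hts.le
      have f : (-σ) * (t - s) ≤ ((-t) + (t - s)) * (t - s) :=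
        mul_le_mul_of_nonneg_right (show -σ ≤ (-t) + (t - s) by linarith) hts.le
      have f2 : (t - s) * (t - s) ≤ (1/4) * (t - s) :=
        mul_le_mul_of_nonneg_right dts4 hts.le
      have f3 : 1 * (t - s) ≤ (-t) * (t - s) :=
        mul_le_mul_of_nonneg_right hxt1 hts.le
      nlinarith [h8, f, f2, f3]
    have e1 : (t - s) * (gt * (1/2)) ≤ p - q :=
      le_trans (mul_le_mul_of_nonneg_left d2 hts.le) hIl
    have e2 : (t - s) * ((-t) * p) ≤ (t - s) * gt :=
      mul_le_mul_of_nonneg_left hgt1 hts.le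
    have e3 : ζ * p ≤ 10 * (-t) * (t - s) * p := mul_le_mul_of_nonneg_right d3 hp0.le
    linarith

lemma key_lemma (p q : ℝ) (hq0 : 0 < q) (hqp : q < p) (hp : p ≤ 0.1) :
    0 < Vfun q - Vfun p ∧ p - q ≤ 5 * (Vfun q - Vfun p) * p ∧
      (Vfun q - Vfun p ≤ 1/10 → 1/20 * (Vfun q - Vfun p) * p ≤ p - q) := by
  have hp0 : 0 < p := lt_trans hq0 hqp
  have hp1 : p < 1 := lt_of_le_of_lt hp (by norm_num)
  have hq1 : q < 1 := lt_trans (lt_of_lt_of_le hqp hp) (by norm_num)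
  obtain ⟨t, hPt, hVp⟩ : ∃ t, Phi t = p ∧ Vfun p = (gphi t / Phi t) ^ 2 :=
    ⟨PhiInv p, Phi_PhiInv hp0 hp1, by rw [Vfun, Phi_PhiInv hp0 hp1]⟩
  obtain ⟨s, hPs, hVq⟩ : ∃ s, Phi s = q ∧ Vfun q = (gphi s / Phi s) ^ 2 :=
    ⟨PhiInv q, Phi_PhiInv hq0 hq1, by rw [Vfun, Phi_PhiInv hq0 hq1]⟩
  rw [hVp, hVq]
  have hst : s < t := by
    apply Phi_strictMono.lt_iff_lt.mp
    rw [hPt, hPs]; exact hqp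
  have ht1 : t ≤ -1 := by
    apply Phi_strictMono.le_iff_le.mp
    rw [hPt]; exact le_trans hp Phi_neg_one
  have hts : 0 < t - s := by linarith
  -- MVT for H on [s, t]
  obtain ⟨σ, hσ_mem, hσ_eq⟩ := exists_hasDerivAt_eq_slope
    (fun y => (gphi y / Phi y) ^ 2)
    (fun u => -(2 * (gphi u / Phi u) ^ 2 * (gphi u / Phi u + u))) hst
    (((continuous_gphi.div continuous_Phi fun y => (Phi_pos y).ne').pow 2).continuousOn)
    (fun u _ => hasDerivAt_H u)
  have hσ1 : σ ≤ -1 := le_trans hσ_mem.2.le ht1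
  obtain ⟨hDl, hDu⟩ := D_bounds hσ1
  have hζeq : (gphi s / Phi s) ^ 2 - (gphi t / Phi t) ^ 2 =
      (2 * (gphi σ / Phi σ) ^ 2 * (gphi σ / Phi σ + σ)) * (t - s) := by
    rw [eq_div_iff hts.ne'] at hσ_eq
    linear_combination hσ_eq
  -- integral bounds
  have hI : p - q = ∫ x in s..t, gphi x := by rw [← hPt, ← hPs]; exact Phi_sub s t
  have hIu : p - q ≤ (t - s) * gphi t := by
    rw [hI]
    have h := intervalIntegral.integral_mono_on hst.le integrable_gphi.intervalIntegrable
      intervalIntegrable_const (fun u hu => gphi_mono hu.2 (le_trans ht1 (by norm_num)))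
    simpa [smul_eq_mul, mul_comm] using h
  have hIl : (t - s) * gphi s ≤ p - q := by
    rw [hI]
    have h := intervalIntegral.integral_mono_on (g := gphi) hst.le intervalIntegrable_const
      integrable_gphi.intervalIntegrable
      (fun u hu => gphi_mono hu.1 (le_trans hu.2 (le_trans ht1 (by norm_num))))
    simpa [smul_eq_mul, mul_comm] using h
  have hgt2 : gphi t ≤ 2 * (-t) * p := hPt ▸ g_le_2xP ht1
  have hgt1 : (-t) * p ≤ gphi t := hPt ▸ xP_le_g ht1
  exact endgame p q t s σ _ _ (gphi t) (gphi s) hp0 hqp ht1 hσ_mem.1 hσ_mem.2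
    hDl hDu hζeq hIu hIl hgt2 hgt1 (gphi_pos t) (gphi_ratio s t)

theorem stmt17 :
    StrictAntiOn Vfun (Set.Ioc (0 : ℝ) 0.1) ∧
      ∃ c₀ c C : ℝ, 0 < c₀ ∧ 0 < c ∧ 0 < C ∧
        ∀ p q : ℝ, 0 < q → q < p → p ≤ 0.1 →
          0 < Vfun q - Vfun p → Vfun q - Vfun p ≤ c₀ →
          c * (Vfun q - Vfun p) * p ≤ p - q ∧ p - q ≤ C * (Vfun q - Vfun p) * p := by
  constructor
  · intro q hq p hp hqp
    have h := (key_lemma p q hq.1 hqp hp.2).1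
    linarith
  · refine ⟨1/10, 1/20, 5, by norm_num, by norm_num, by norm_num, ?_⟩
    intro p q hq0 hqp hp _hζpos hζc₀
    obtain ⟨_, hu, hl⟩ := key_lemma p q hq0 hqp hp
    exact ⟨hl hζc₀, hu⟩
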